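/- Let (Ω, Σ, μ) be a measure space, 0 < ε < 1, f in the closed unit ball of L¹(μ) (complex-valued) and g in the closed unit ball of L∞(μ). If 1 - ε² < Re ∫_Ω f g dμ, then the measurable set C = {t ∈ Ω : Re(f(t)g(t)) > (1-ε)|f(t)|} satisfies Re ∫_C f g dμ > 1 - ε. -/

import Mathlib

/-!
Split `∫ Re (f g)` over `C` and its complement. On `C` the integrand is at most `|f|`, off `C`
it is at most `(1 - ε) |f|`; with `a = ∫_C |f|` and `∫_{Cᶜ} |f| ≤ 1 - a` this gives
`1 - ε² < R + (1 - ε)(1 - R)` for `R = Re ∫_C f g ≤ a`, i.e. `ε (1 - ε) < ε R`.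
-/

open MeasureTheory

theorem lt_setIntegral_of_one_sub_sq_lt_integral {Ω : Type*} [MeasurableSpace Ω]
    {μ : Measure Ω} {ε : ℝ} (hε0 : 0 < ε) (hε1 : ε ≤ 1) {φ ψ : Ω → ℝ}
    (hφ : Integrable φ μ) (hψ : Integrable ψ μ) (hφψ : φ ≤ᵐ[μ] ψ)
    (hψ1 : ∫ t, ψ t ∂μ ≤ 1) (h : 1 - ε ^ 2 < ∫ t, φ t ∂μ) :
    1 - ε < ∫ t in {t | φ t > (1 - ε) * ψ t}, φ t ∂μ := by
  set C := {t | φ t > (1 - ε) * ψ t}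
  have hC : NullMeasurableSet C μ :=
    nullMeasurableSet_lt (hψ.aemeasurable.const_mul _) hφ.aemeasurable
  have hφ_split := integral_add_compl₀ hC hφ
  have hψ_split := integral_add_compl₀ hC hψ
  have hφψ_on_C : ∫ t in C, φ t ∂μ ≤ ∫ t in C, ψ t ∂μ :=
    setIntegral_mono_ae hφ.integrableOn hψ.integrableOn hφψ
  have hφψ_off_C : ∫ t in Cᶜ, φ t ∂μ ≤ (1 - ε) * ∫ t in Cᶜ, ψ t ∂μ := by
    rw [← integral_const_mul]
    exact setIntegral_mono_on₀ hφ.integrableOn (hψ.const_mul _).integrableOn hC.compl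
      fun t ht => not_lt.mp ht
  nlinarith

theorem stmt1 {Ω : Type*} [MeasurableSpace Ω] (μ : Measure Ω)
    (ε : ℝ) (hε0 : 0 < ε) (hε1 : ε < 1)
    (f g : Ω → ℂ) (hf : Integrable f μ)
    (hf1 : ∫ t, ‖f t‖ ∂μ ≤ 1)
    (hg : Measurable g) (hg1 : ∀ᵐ t ∂μ, ‖g t‖ ≤ 1)
    (h : 1 - ε ^ 2 < (∫ t, f t * g t ∂μ).re) :
    1 - ε <
      (∫ t in {t | (f t * g t).re > (1 - ε) * ‖f t‖}, f t * g t ∂μ).re := by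
  have hfg : Integrable (fun t => f t * g t) μ :=
    hf.mul_bdd hg.aestronglyMeasurable hg1
  have hre_le_norm : (fun t => (f t * g t).re) ≤ᵐ[μ] fun t => ‖f t‖ := by
    filter_upwards [hg1] with t ht
    calc (f t * g t).re ≤ ‖f t‖ * ‖g t‖ := (Complex.re_le_norm _).trans (norm_mul_le _ _)
      _ ≤ ‖f t‖ := mul_le_of_le_one_right (norm_nonneg _) ht
  calc 1 - ε < ∫ t in {t | (f t * g t).re > (1 - ε) * ‖f t‖}, (f t * g t).re ∂μ :=
        lt_setIntegral_of_one_sub_sq_lt_integral hε0 hε1.le hfg.re hf.norm hre_le_norm hf1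
          (h.trans_eq (integral_re hfg).symm)
    _ = _ := integral_re hfg.integrableOn
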